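/- Let C be a finite tensor category with simple objects L_i and projective covers P_i, and let D: I → I be the bijection on labels defined by P_i* ≅ P_{D(i)}. Let ρ := D(0), where 0 labels the unit object. Then the simple object L_ρ is invertible, i.e. L_ρ ⊗ L_ρ* ≅ 1 ≅ L_ρ* ⊗ L_ρ. -/

import Mathlib

/-!
Let `q₀ : P₀ ⟶ 𝟙` and `p : P ⟶ L` be the projective covers of the unit and of `L = L_ρ`; since
`P₀ᘁ ≅ P`, `(P₀, P)` is an exact pairing. The mate of `q₀` is a nonzero map `𝟙 ⟶ P`, whose mate
in turn is a nonzero map `Pᘁ ⟶ 𝟙`; hence `Pᘁ` covers the unit and `(P, P₀)` is an exact pairing too.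

The projectives `P₀ ⊗ L` and `L ⊗ P₀` map onto `L`, so `P` is a direct summand of both. By
adjunction, every simple subobject of either one is `𝟙`, and maps from `𝟙` into either one
correspond to `Hom(P, L)`, which is one-dimensional. So the complement is zero and
`P₀ ⊗ L ≅ P ≅ L ⊗ P₀`. Dualising the first isomorphism gives `Lᘁ ⊗ P ≅ P₀`.

Consequently `(L ⊗ Lᘁ) ⊗ P ≅ P` and `(Lᘁ ⊗ L) ⊗ P₀ ≅ P₀`. Since these objects have finite length,
the mono `η ▷ P` and the epi `ε ▷ P₀` are isomorphisms. As `𝟙` embeds in `P` and is a quotient of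
`P₀`, tensoring with `P` or with `P₀` is faithful, so `η` and `ε` are themselves isomorphisms.
-/

open CategoryTheory MonoidalCategory Limits

universe u v w

/-- A *finite tensor category* over an algebraically closed field `k`. -/
class FiniteTensorCategory (k : Type u) (C : Type v) [Field k]
    [Category.{w} C] [Abelian C] [CategoryTheory.Linear k C] [MonoidalCategory C]
    [MonoidalPreadditive C] [MonoidalLinear k C] [RigidCategory C] : Prop where
  homFinite : ∀ X Y : C, FiniteDimensional k (X ⟶ Y)
  finiteLength : ∀ X : C, WellFoundedGT (Subobject X) ∧ WellFoundedLT (Subobject X)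
  simpleUnit : Simple (𝟙_ C)
  finitelyManySimples : ∃ (ι : Type) (_ : Finite ι) (L : ι → C),
      (∀ i, Simple (L i)) ∧ ∀ X : C, Simple X → ∃ i, Nonempty (X ≅ L i)
  projectiveCovers : ∀ X : C, Simple X →
      ∃ (P : C) (f : P ⟶ X), Projective P ∧ Epi f ∧
        ∀ (R : C) (g : R ⟶ P), Epi (g ≫ f) → Epi g

namespace CategoryTheory

section FiniteLength

variable {C : Type*} [Category C] [Abelian C]

-- The subobjects `im fⁿ` stabilise, and at that point `f` has a right inverse.
theorem isIso_of_mono_of_isArtinianObject {X : C} [IsArtinianObject X] (f : X ⟶ X) [Mono f] :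
    IsIso f := by
  have mono_pow (n : ℕ) : Mono (End.of f ^ n) := by
    induction n with
    | zero => exact inferInstanceAs (Mono (𝟙 X))
    | succ n ih => rw [pow_succ, End.mul_def]; infer_instance
  obtain ⟨_, ⟨n, rfl⟩, hmin⟩ := wellFounded_lt.has_min
    (Set.range fun n : ℕ => Subobject.mk (End.of f ^ n)) ⟨_, 0, rfl⟩
  have hle : Subobject.mk (End.of f ^ (n + 1)) ≤ Subobject.mk (End.of f ^ n) :=
    Subobject.mk_le_mk_of_comm f (by rw [pow_succ, End.mul_def])
  have heq := hle.eq_of_not_lt (hmin _ ⟨n + 1, rfl⟩)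
  have hsplit : Subobject.ofMkLEMk _ _ heq.ge ≫ f = 𝟙 X := by
    rw [← cancel_mono (End.of f ^ n), Category.assoc, Category.id_comp]
    exact Subobject.ofMkLEMk_comp heq.ge
  have : IsSplitEpi f := ⟨⟨⟨_, hsplit⟩⟩⟩
  exact isIso_of_mono_of_epi f

theorem isIso_of_epi_of_isNoetherianObject {X : C} [IsNoetherianObject X] (f : X ⟶ X) [Epi f] :
    IsIso f := by
  have : WellFoundedLT (Subobject (Opposite.op X)) :=
    (Abelian.subobjectIsoSubobjectOp X).symm.dual.strictMono.wellFoundedLT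
  have : IsArtinianObject (Opposite.op X) := ⟨this⟩
  have := isIso_of_mono_of_isArtinianObject f.op
  exact isIso_of_op f

end FiniteLength

structure IsProjectiveCover {C : Type*} [Category C] {P L : C} (p : P ⟶ L) : Prop where
  projective : Projective P
  epi : Epi p
  epi_of_epi_comp {R : C} (g : R ⟶ P) : Epi (g ≫ p) → Epi g

namespace IsProjectiveCover

variable {C : Type*} [Category C] {P L : C} {p : P ⟶ L}

theorem comp_iso (hp : IsProjectiveCover p) {L' : C} (e : L ≅ L') :
    IsProjectiveCover (p ≫ e.hom) where
  projective := hp.projective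
  epi := have := hp.epi; epi_comp _ _
  epi_of_epi_comp g hg := hp.epi_of_epi_comp g (by simpa using epi_comp (g ≫ p ≫ e.hom) e.inv)

theorem nonempty_retract (hp : IsProjectiveCover p) {Q : C} [Projective Q] (g : Q ⟶ L) [Epi g] :
    Nonempty (Retract P Q) := by
  have := hp.projective
  have := hp.epi
  have : Epi (Projective.factorThru g p) :=
    hp.epi_of_epi_comp _ (by rw [Projective.factorThru_comp]; infer_instance)
  exact ⟨⟨Projective.factorThru (𝟙 P) (Projective.factorThru g p), _,
    Projective.factorThru_comp _ _⟩⟩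

variable [Abelian C]

theorem ne_zero (hp : IsProjectiveCover p) [Simple L] : p ≠ 0 := fun h =>
  have := hp.epi
  Simple.not_isZero L (IsZero.of_epi_eq_zero p h)

theorem exists_ne_zero_of_ne_zero (hp : IsProjectiveCover p) [Simple L] {U Q : C} [Projective Q]
    {u : U ⟶ P} (hu : u ≠ 0) {g : Q ⟶ L} (hg : g ≠ 0) : ∃ v : U ⟶ Q, v ≠ 0 := by
  have := epi_of_nonzero_to_simple hg
  obtain ⟨e⟩ := hp.nonempty_retract g
  exact ⟨u ≫ e.i, mt (zero_of_comp_mono e.i) hu⟩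

theorem exists_comp_eq (hp : IsProjectiveCover p) [Simple L] {S : C} [Simple S] {q : P ⟶ S}
    (hq : q ≠ 0) : ∃ r : S ⟶ L, q ≫ r = p := by
  have := epi_of_nonzero_to_simple hq
  have hker : kernel.ι q ≫ p = 0 := by
    by_contra h
    have := hp.epi_of_epi_comp _ (epi_of_nonzero_to_simple h)
    exact hq (zero_of_epi_comp _ (kernel.condition q))
  exact ⟨Abelian.epiDesc q p hker, Abelian.comp_epiDesc q p hker⟩

theorem nonempty_iso_of_ne_zero (hp : IsProjectiveCover p) [Simple L] {S : C} [Simple S]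
    {q : P ⟶ S} (hq : q ≠ 0) : Nonempty (S ≅ L) := by
  obtain ⟨r, hr⟩ := hp.exists_comp_eq hq
  have : IsIso r := isIso_of_hom_simple fun h => hp.ne_zero (by rw [← hr, h, comp_zero])
  exact ⟨asIso r⟩

theorem finrank_hom_eq_one (k : Type*) [Field k] [IsAlgClosed k] [Linear k C]
    (hp : IsProjectiveCover p) [Simple L] [FiniteDimensional k (L ⟶ L)] :
    Module.finrank k (P ⟶ L) = 1 := by
  refine (finrank_eq_one_iff_of_nonzero' p hp.ne_zero).mpr fun q => ?_
  by_cases hq : q = 0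
  · exact ⟨0, by rw [hq, zero_smul]⟩
  obtain ⟨r, hr⟩ := hp.exists_comp_eq hq
  obtain ⟨c, rfl⟩ := endomorphism_simple_eq_smul_id k r
  have hc : c ≠ 0 := by rintro rfl; exact hp.ne_zero (by simp [← hr])
  refine ⟨c⁻¹, ?_⟩
  rw [← hr, Linear.comp_smul, Category.comp_id, smul_smul, inv_mul_cancel₀ hc, one_smul]

end IsProjectiveCover

theorem Retract.isIso_r_of_socle {k : Type*} [Field k] {C : Type*} [Category C] [Abelian C]
    [Linear k C] {U P T : C} (e : Retract P T) [IsArtinianObject T] {u : U ⟶ P} (hu : u ≠ 0)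
    (hsoc : ∀ (S : C) [Simple S] (m : S ⟶ T), m ≠ 0 → Nonempty (S ≅ U))
    (hdim : Module.finrank k (U ⟶ T) = 1) : IsIso e.r := by
  -- A simple subobject of `ker e.r` would give a map `U ⟶ T` independent of `u ≫ e.i`.
  suffices kernel.ι e.r = 0 by
    have := Abelian.mono_of_kernel_ι_eq_zero e.r this
    exact isIso_of_mono_of_epi e.r
  by_contra hι
  have : IsArtinianObject (kernel e.r) := isArtinianObject_of_mono (kernel.ι e.r)
  obtain ⟨Y, _⟩ := exists_simple_subobject fun h : IsZero (kernel e.r) => hι (h.eq_of_src _ _)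
  have hm : Y.arrow ≫ kernel.ι e.r ≠ 0 := fun h =>
    Simple.not_isZero (Y : C) (IsZero.of_mono_eq_zero _ h)
  obtain ⟨i⟩ := hsoc Y _ hm
  obtain ⟨c, hc⟩ := (finrank_eq_one_iff_of_nonzero' _ (mt (zero_of_comp_mono e.i) hu)).mp hdim
    (i.inv ≫ Y.arrow ≫ kernel.ι e.r)
  have hc0 : c = 0 := by
    have := congrArg (· ≫ e.r) hc
    simp only [Linear.smul_comp, Category.assoc, kernel.condition, comp_zero, Retract.retract,
      Category.comp_id] at this
    exact (smul_eq_zero.mp this).resolve_right hu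
  rw [hc0, zero_smul] at hc
  exact hm (by simpa using congrArg (i.hom ≫ ·) hc.symm)

section Rigid

variable {C : Type*} [Category C] [MonoidalCategory C] [RigidCategory C]

instance epi_whiskerRight_of_rigid {A B : C} (f : A ⟶ B) [Epi f] (Y : C) : Epi (f ▷ Y) :=
  have := (tensorRightAdjunction Y Yᘁ).isLeftAdjoint
  (tensorRight Y).map_epi f

instance mono_whiskerRight_of_rigid {A B : C} (f : A ⟶ B) [Mono f] (Y : C) : Mono (f ▷ Y) :=
  have := (tensorRightAdjunction (ᘁY) Y).isRightAdjoint
  (tensorRight Y).map_mono f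

instance epi_whiskerLeft_of_rigid (X : C) {A B : C} (f : A ⟶ B) [Epi f] : Epi (X ◁ f) :=
  have := (tensorLeftAdjunction (ᘁX) X).isLeftAdjoint
  (tensorLeft X).map_epi f

instance mono_whiskerLeft_of_rigid (X : C) {A B : C} (f : A ⟶ B) [Mono f] : Mono (X ◁ f) :=
  have := (tensorLeftAdjunction X Xᘁ).isRightAdjoint
  (tensorLeft X).map_mono f

theorem projective_tensor_of_left (Q Y : C) [Projective Q] : Projective (Q ⊗ Y) :=
  have := (tensorRightAdjunction Yᘁ Yᘁᘁ).isLeftAdjoint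
  (tensorRightAdjunction Y Yᘁ).map_projective Q inferInstance

theorem projective_tensor_of_right (Y Q : C) [Projective Q] : Projective (Y ⊗ Q) :=
  have := (tensorLeftAdjunction (ᘁᘁY) (ᘁY)).isLeftAdjoint
  (tensorLeftAdjunction (ᘁY) Y).map_projective Q inferInstance

end Rigid

section Pairing

variable (k : Type*) [Semiring k] {C : Type*} [Category C] [Preadditive C] [Linear k C]
  [MonoidalCategory C] [MonoidalPreadditive C] [MonoidalLinear k C]

def tensorLeftHomLinearEquiv (X Y Y' Z : C) [ExactPairing Y Y'] :
    (Y' ⊗ X ⟶ Z) ≃ₗ[k] (X ⟶ Y ⊗ Z) where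
  __ := tensorLeftHomEquiv X Y Y' Z
  map_add' _ _ := by simp [tensorLeftHomEquiv]
  map_smul' _ _ := by simp [tensorLeftHomEquiv]

def tensorRightHomLinearEquiv (X Y Y' Z : C) [ExactPairing Y Y'] :
    (X ⊗ Y ⟶ Z) ≃ₗ[k] (X ⟶ Z ⊗ Y') where
  __ := tensorRightHomEquiv X Y Y' Z
  map_add' _ _ := by simp [tensorRightHomEquiv]
  map_smul' _ _ := by simp [tensorRightHomEquiv]

def homLinearEquivUnitTensorLeft (X Y Z : C) [ExactPairing X Y] :
    (Y ⟶ Z) ≃ₗ[k] (𝟙_ C ⟶ X ⊗ Z) :=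
  (Linear.homCongr k (ρ_ Y).symm (Iso.refl Z)).trans (tensorLeftHomLinearEquiv k (𝟙_ C) X Y Z)

def homLinearEquivUnitTensorRight (X Y Z : C) [ExactPairing X Y] :
    (X ⟶ Z) ≃ₗ[k] (𝟙_ C ⟶ Z ⊗ Y) :=
  (Linear.homCongr k (λ_ X).symm (Iso.refl Z)).trans (tensorRightHomLinearEquiv k (𝟙_ C) X Y Z)

end Pairing

theorem exists_unit_hom_ne_zero (k : Type*) [Semiring k] {C : Type*} [Category C]
    [Preadditive C] [Linear k C] [MonoidalCategory C] [MonoidalPreadditive C] [MonoidalLinear k C]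
    {X Y : C} [ExactPairing X Y] {q : X ⟶ 𝟙_ C} (hq : q ≠ 0) :
    ∃ u : 𝟙_ C ⟶ Y, u ≠ 0 :=
  ⟨((homLinearEquivUnitTensorRight k X Y (𝟙_ C)).trans (Linear.homCongr k (Iso.refl _) (λ_ Y))) q,
    (LinearEquiv.map_ne_zero_iff _).mpr hq⟩

theorem exists_hom_unit_ne_zero (k : Type*) [Semiring k] {C : Type*} [Category C]
    [Preadditive C] [Linear k C] [MonoidalCategory C] [MonoidalPreadditive C] [MonoidalLinear k C]
    {X Y : C} [ExactPairing X Y] {u : 𝟙_ C ⟶ X} (hu : u ≠ 0) :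
    ∃ q : Y ⟶ 𝟙_ C, q ≠ 0 :=
  ⟨((homLinearEquivUnitTensorLeft k X Y (𝟙_ C)).trans
      (Linear.homCongr k (Iso.refl _) (ρ_ X))).symm u,
    (LinearEquiv.map_ne_zero_iff _).mpr hu⟩

section Zigzag

variable {C : Type*} [Category C] [Preadditive C] [MonoidalCategory C] [MonoidalPreadditive C]

theorem coevaluation_ne_zero {X Y : C} [ExactPairing X Y] (hX : ¬IsZero X) : η_ X Y ≠ 0 :=
  fun h => hX <| (IsZero.iff_id_eq_zero X).mpr <| by
    simpa [h] using (congrArg (fun t => (λ_ X).inv ≫ t ≫ (ρ_ X).hom)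
      (ExactPairing.evaluation_coevaluation X Y)).symm

theorem evaluation_ne_zero {X Y : C} [ExactPairing X Y] (hX : ¬IsZero X) : ε_ X Y ≠ 0 :=
  fun h => hX <| (IsZero.iff_id_eq_zero X).mpr <| by
    simpa [h] using (congrArg (fun t => (λ_ X).inv ≫ t ≫ (ρ_ X).hom)
      (ExactPairing.evaluation_coevaluation X Y)).symm

end Zigzag

section Faithful

variable {C : Type*} [Category C] [Abelian C] [MonoidalCategory C] [MonoidalPreadditive C]
  [RigidCategory C]

theorem faithful_tensorRight_of_mono {X : C} (u : 𝟙_ C ⟶ X) [Mono u] :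
    (tensorRight X).Faithful := by
  refine ⟨fun {A B} f g h => sub_eq_zero.mp ?_⟩
  have : (f - g) ▷ 𝟙_ C = 0 := by
    rw [← cancel_mono (B ◁ u), ← whisker_exchange, zero_comp]
    change A ◁ u ≫ (tensorRight X).map (f - g) = 0
    rw [Functor.map_sub, h, sub_self, comp_zero]
  calc f - g = (ρ_ A).inv ≫ (f - g) ▷ 𝟙_ C ≫ (ρ_ B).hom := by simp
    _ = 0 := by rw [this, zero_comp, comp_zero]

theorem faithful_tensorRight_of_epi {X : C} (q : X ⟶ 𝟙_ C) [Epi q] :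
    (tensorRight X).Faithful := by
  refine ⟨fun {A B} f g h => sub_eq_zero.mp ?_⟩
  have : (f - g) ▷ 𝟙_ C = 0 := by
    rw [← cancel_epi (A ◁ q), whisker_exchange, comp_zero]
    change (tensorRight X).map (f - g) ≫ B ◁ q = 0
    rw [Functor.map_sub, h, sub_self, zero_comp]
  calc f - g = (ρ_ A).inv ≫ (f - g) ▷ 𝟙_ C ≫ (ρ_ B).hom := by simp
    _ = 0 := by rw [this, zero_comp, comp_zero]

end Faithful

section DualCovers

variable (k : Type*) [Field k] [IsAlgClosed k] {C : Type*} [Category C] [Abelian C] [Linear k C]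
  [MonoidalCategory C] [MonoidalPreadditive C] [MonoidalLinear k C] [RigidCategory C]
  [Simple (𝟙_ C)] {P₀ P L : C} [Simple L] [ExactPairing P₀ P] [ExactPairing P P₀]
  {q₀ : P₀ ⟶ 𝟙_ C} {p : P ⟶ L}

theorem nonempty_cover_unit_tensor_iso (hq₀ : IsProjectiveCover q₀) (hp : IsProjectiveCover p)
    [FiniteDimensional k (L ⟶ L)] [IsArtinianObject (P₀ ⊗ L)] : Nonempty (P₀ ⊗ L ≅ P) := by
  have := hq₀.projective
  have := hp.projective
  have := hq₀.epi
  obtain ⟨u, hu⟩ := exists_unit_hom_ne_zero k (Y := P) hq₀.ne_zero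
  have := projective_tensor_of_left P₀ L
  obtain ⟨e⟩ := hp.nonempty_retract ((q₀ ▷ L) ≫ (λ_ L).hom)
  have hsoc (S : C) [Simple S] (m : S ⟶ P₀ ⊗ L) (hm : m ≠ 0) : Nonempty (S ≅ 𝟙_ C) := by
    have := projective_tensor_of_left P S
    obtain ⟨v, hv⟩ := hp.exists_ne_zero_of_ne_zero hu
      ((LinearEquiv.map_ne_zero_iff (tensorLeftHomLinearEquiv k S P₀ P L).symm).mpr hm)
    exact hq₀.nonempty_iso_of_ne_zero
      ((LinearEquiv.map_ne_zero_iff (homLinearEquivUnitTensorLeft k P P₀ S).symm).mpr hv)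
  have := e.isIso_r_of_socle hu hsoc
    ((homLinearEquivUnitTensorLeft k P₀ P L).finrank_eq.symm.trans (hp.finrank_hom_eq_one k))
  exact ⟨asIso e.r⟩

theorem nonempty_tensor_cover_unit_iso (hq₀ : IsProjectiveCover q₀) (hp : IsProjectiveCover p)
    [FiniteDimensional k (L ⟶ L)] [IsArtinianObject (L ⊗ P₀)] : Nonempty (L ⊗ P₀ ≅ P) := by
  have := hq₀.projective
  have := hp.projective
  have := hq₀.epi
  obtain ⟨u, hu⟩ := exists_unit_hom_ne_zero k (Y := P) hq₀.ne_zero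
  have := projective_tensor_of_right L P₀
  obtain ⟨e⟩ := hp.nonempty_retract ((L ◁ q₀) ≫ (ρ_ L).hom)
  have hsoc (S : C) [Simple S] (m : S ⟶ L ⊗ P₀) (hm : m ≠ 0) : Nonempty (S ≅ 𝟙_ C) := by
    have := projective_tensor_of_right S P
    obtain ⟨v, hv⟩ := hp.exists_ne_zero_of_ne_zero hu
      ((LinearEquiv.map_ne_zero_iff (tensorRightHomLinearEquiv k S P P₀ L).symm).mpr hm)
    exact hq₀.nonempty_iso_of_ne_zero
      ((LinearEquiv.map_ne_zero_iff (homLinearEquivUnitTensorRight k P₀ P S).symm).mpr hv)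
  have := e.isIso_r_of_socle hu hsoc
    ((homLinearEquivUnitTensorRight k P P₀ L).finrank_eq.symm.trans (hp.finrank_hom_eq_one k))
  exact ⟨asIso e.r⟩

theorem isIso_coevaluation_and_evaluation [∀ X : C, IsArtinianObject X]
    [∀ X : C, IsNoetherianObject X] [FiniteDimensional k (L ⟶ L)] (hq₀ : IsProjectiveCover q₀)
    (hp : IsProjectiveCover p) : IsIso (η_ L Lᘁ) ∧ IsIso (ε_ L Lᘁ) := by
  obtain ⟨θ⟩ := nonempty_cover_unit_tensor_iso k hq₀ hp
  obtain ⟨θ'⟩ := nonempty_tensor_cover_unit_iso k hq₀ hp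
  let κ : Lᘁ ⊗ P ≅ P₀ := rightDualIso (exactPairingCongrLeft θ.symm) ‹ExactPairing P P₀›
  have := hq₀.epi
  obtain ⟨u, hu⟩ := exists_unit_hom_ne_zero k (Y := P) hq₀.ne_zero
  have := mono_of_nonzero_from_simple hu
  have := mono_of_nonzero_from_simple (coevaluation_ne_zero (Y := Lᘁ) (Simple.not_isZero L))
  have := epi_of_nonzero_to_simple (evaluation_ne_zero (Y := Lᘁ) (Simple.not_isZero L))
  let j : (L ⊗ Lᘁ) ⊗ P ≅ 𝟙_ C ⊗ P := α_ _ _ _ ≪≫ whiskerLeftIso L κ ≪≫ θ' ≪≫ (λ_ P).symm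
  let j' : 𝟙_ C ⊗ P₀ ≅ (Lᘁ ⊗ L) ⊗ P₀ :=
    λ_ P₀ ≪≫ κ.symm ≪≫ whiskerLeftIso Lᘁ θ'.symm ≪≫ (α_ _ _ _).symm
  have : IsIso ((tensorRight P).map (η_ L Lᘁ)) := by
    have := isIso_of_mono_of_isArtinianObject (η_ L Lᘁ ▷ P ≫ j.hom)
    exact IsIso.of_isIso_comp_right (η_ L Lᘁ ▷ P) j.hom
  have : IsIso ((tensorRight P₀).map (ε_ L Lᘁ)) := by
    have := isIso_of_epi_of_isNoetherianObject (j'.hom ≫ ε_ L Lᘁ ▷ P₀)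
    exact IsIso.of_isIso_comp_left j'.hom (ε_ L Lᘁ ▷ P₀)
  have := faithful_tensorRight_of_mono u
  have := faithful_tensorRight_of_epi q₀
  exact ⟨isIso_of_reflects_iso _ (tensorRight P), isIso_of_reflects_iso _ (tensorRight P₀)⟩

end DualCovers

end CategoryTheory

theorem distinguished_object_invertible_general {k : Type u} {C : Type v} [Field k] [IsAlgClosed k]
    [Category.{w} C] [Abelian C] [CategoryTheory.Linear k C] [MonoidalCategory C]
    [MonoidalPreadditive C] [MonoidalLinear k C] [RigidCategory C]
    [FiniteTensorCategory k C]
    {ι : Type}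
    (L : ι → C) (hL : ∀ i, Simple (L i))
    (hLdist : ∀ i j, Nonempty (L i ≅ L j) → i = j)
    (P : ι → C)
    (hP : ∀ i, Projective (P i) ∧ ∃ f : P i ⟶ L i, Epi f ∧
      ∀ (R : C) (g : R ⟶ P i), Epi (g ≫ f) → Epi g)
    (D : ι → ι)
    (hD : ∀ i, Nonempty ((P i)ᘁ ≅ P (D i)))
    (i0 : ι) (hi0 : Nonempty (L i0 ≅ 𝟙_ C)) :
    Nonempty ((L (D i0) ⊗ (L (D i0))ᘁ) ≅ 𝟙_ C) ∧
    Nonempty (((L (D i0))ᘁ ⊗ L (D i0)) ≅ 𝟙_ C) := by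
  obtain ⟨e₀⟩ := hi0
  have := FiniteTensorCategory.simpleUnit (k := k) (C := C)
  have (X : C) : IsArtinianObject X := ⟨(FiniteTensorCategory.finiteLength k X).2⟩
  have (X : C) : IsNoetherianObject X := ⟨(FiniteTensorCategory.finiteLength k X).1⟩
  have := FiniteTensorCategory.homFinite (k := k) (C := C)
  choose p hp using fun i => (hP i).2
  have hcover (i : ι) : IsProjectiveCover (p i) := ⟨(hP i).1, (hp i).1, fun g => (hp i).2 _ g⟩
  have hq₀ := (hcover i0).comp_iso e₀
  obtain ⟨e⟩ := hD i0
  let _ : ExactPairing (P i0) (P (D i0)) := exactPairingCongrRight e.symm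
  have hρ : D (D i0) = i0 := by
    obtain ⟨u, hu⟩ := exists_unit_hom_ne_zero k (Y := P (D i0)) hq₀.ne_zero
    obtain ⟨q, hq⟩ := exists_hom_unit_ne_zero k (Y := (P (D i0))ᘁ) hu
    obtain ⟨e'⟩ := hD (D i0)
    obtain ⟨i⟩ := (hcover (D (D i0))).nonempty_iso_of_ne_zero (S := L i0)
      (q := e'.inv ≫ q ≫ e₀.inv) (by simpa using hq)
    exact hLdist _ _ ⟨i.symm⟩
  obtain ⟨e'⟩ := hD (D i0)
  let _ : ExactPairing (P (D i0)) (P i0) :=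
    exactPairingCongrRight (e' ≪≫ eqToIso (congrArg P hρ)).symm
  obtain ⟨_, _⟩ := isIso_coevaluation_and_evaluation k hq₀ (hcover (D i0))
  exact ⟨⟨(asIso (η_ _ _)).symm⟩, ⟨asIso (ε_ _ _)⟩⟩

/-- The distinguished invertible object.  Let `L i` be a complete family of pairwise
non-isomorphic simple objects of a finite tensor category `C`, with projective covers `P i`,
let `D : ι → ι` be the bijection determined by `(P i)ᘁ ≅ P (D i)`, and let `i0` be the label
of the unit object.  Then the simple object `L (D i0)` is invertible:
`L ρ ⊗ (L ρ)ᘁ ≅ 𝟙 ≅ (L ρ)ᘁ ⊗ L ρ` where `ρ = D i0`. -/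
theorem distinguished_object_invertible {k : Type u} {C : Type v} [Field k] [IsAlgClosed k]
    [Category.{w} C] [Abelian C] [CategoryTheory.Linear k C] [MonoidalCategory C]
    [MonoidalPreadditive C] [MonoidalLinear k C] [RigidCategory C]
    [FiniteTensorCategory k C]
    {ι : Type} [Fintype ι]
    (L : ι → C) (hL : ∀ i, Simple (L i))
    (hLall : ∀ X : C, Simple X → ∃ i, Nonempty (X ≅ L i))
    (hLdist : ∀ i j, Nonempty (L i ≅ L j) → i = j)
    (P : ι → C)
    (hP : ∀ i, Projective (P i) ∧ ∃ f : P i ⟶ L i, Epi f ∧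
      ∀ (R : C) (g : R ⟶ P i), Epi (g ≫ f) → Epi g)
    (D : ι → ι) (hDbij : Function.Bijective D)
    (hD : ∀ i, Nonempty ((P i)ᘁ ≅ P (D i)))
    (i0 : ι) (hi0 : Nonempty (L i0 ≅ 𝟙_ C)) :
    Nonempty ((L (D i0) ⊗ (L (D i0))ᘁ) ≅ 𝟙_ C) ∧
    Nonempty (((L (D i0))ᘁ ⊗ L (D i0)) ≅ 𝟙_ C) :=
  distinguished_object_invertible_general (k := k) L hL hLdist P hP D hD i0 hi0
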